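/- Let κ ∈ ℝ, let k ∈ ℝ with k < 1, and let m be a positive integer. Define F : ℍ → ℂ by F(τ) := m^{k−1}·Γ(1−k, 4πm·Im τ)·e^{−2πimτ}. Then for every τ = u + iv ∈ ℍ one has ξ_κ F(τ) = −(4π)^{1−k}·v^{κ−k}·e^{2πimτ}. -/

import Mathlib

open Complex MeasureTheory Set Filter
open scoped Real

noncomputable section

/-- Upper incomplete Gamma function `Γ(s,x) = ∫_x^∞ t^{s-1} e^{-t} dt`. -/
def incGamma (s x : ℝ) : ℝ := ∫ t in Set.Ioi x, t ^ (s - 1) * Real.exp (-t)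

/-- Partial derivative `∂/∂u` (in the real direction). -/
def pdx (f : ℂ → ℂ) (τ : ℂ) : ℂ := deriv (fun t : ℝ => f (τ + t)) 0

/-- Partial derivative `∂/∂v` (in the imaginary direction). -/
def pdy (f : ℂ → ℂ) (τ : ℂ) : ℂ := deriv (fun t : ℝ => f (τ + t * Complex.I)) 0

/-- Wirtinger derivative `∂/∂τ̄ = (1/2)(∂/∂u + i ∂/∂v)`. -/
def dbar (f : ℂ → ℂ) (τ : ℂ) : ℂ := (pdx f τ + Complex.I * pdy f τ) / 2

/-- Bruinier–Funke operator `ξ_κ f(τ) = 2i v^κ conj(∂f/∂τ̄)`. -/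
def xiOp (κ : ℝ) (f : ℂ → ℂ) (τ : ℂ) : ℂ :=
  2 * Complex.I * ((τ.im ^ κ : ℝ) : ℂ) * (starRingEnd ℂ) (dbar f τ)

/-- Weight `k` hyperbolic Laplacian `Δ_k = -v²(∂_u² + ∂_v²) + ikv(∂_u + i∂_v)`. -/
def hypLap (k : ℝ) (f : ℂ → ℂ) (τ : ℂ) : ℂ :=
  -(τ.im : ℂ) ^ 2 * (pdx (pdx f) τ + pdy (pdy f) τ) +
    Complex.I * (k : ℂ) * (τ.im : ℂ) * (pdx f τ + Complex.I * pdy f τ)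

lemma incG_cont (s : ℝ) : ContinuousOn (fun t : ℝ => t ^ (s - 1) * Real.exp (-t)) (Ioi 0) := by
  intro t ht
  exact ((Real.continuousAt_rpow_const t (s-1) (Or.inl (ne_of_gt ht))).mul
    (Real.continuous_exp.continuousAt.comp continuous_neg.continuousAt)).continuousWithinAt

lemma incG_integrableOn (s : ℝ) {c : ℝ} (hc : 0 < c) :
    IntegrableOn (fun t : ℝ => t ^ (s - 1) * Real.exp (-t)) (Ioi c) := by
  apply integrable_of_isBigO_exp_neg (b := 1/2) (by norm_num)
  · exact (incG_cont s).mono (fun t ht => lt_of_lt_of_le hc ht)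
  · have h1 : Tendsto (fun t : ℝ => t ^ (s-1) * Real.exp (-(1/2) * t)) atTop (nhds 0) :=
      tendsto_rpow_mul_exp_neg_mul_atTop_nhds_zero (s-1) (1/2) (by norm_num)
    have h2 := (h1.isBigO_one ℝ).mul
      (Asymptotics.isBigO_refl (fun t : ℝ => Real.exp (-(1/2)*t)) atTop)
    refine h2.congr (fun t => ?_) (fun t => one_mul _)
    rw [mul_assoc, ← Real.exp_add]
    rw [show -(1/2:ℝ) * t + -(1/2) * t = -t by ring]

lemma incGamma_hasDerivAt (s : ℝ) {x : ℝ} (hx : 0 < x) :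
    HasDerivAt (incGamma s) (-(x ^ (s - 1) * Real.exp (-x))) x := by
  set f : ℝ → ℝ := fun t => t ^ (s - 1) * Real.exp (-t) with hf
  have hc : 0 < x/2 := by positivity
  have hint := incG_integrableOn s hc
  have key : ∀ y ∈ Ioi (x/2), incGamma s y = incGamma s (x/2) - ∫ t in (x/2)..y, f t := by
    intro y hy
    have hcy : x/2 ≤ y := le_of_lt hy
    rw [intervalIntegral.integral_of_le hcy]
    have hsplit : Ioi (x/2) = Ioc (x/2) y ∪ Ioi y := (Ioc_union_Ioi_eq_Ioi hcy).symm
    have := setIntegral_union (f := f) (μ := volume) Ioc_disjoint_Ioi_same measurableSet_Ioi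
      (hint.mono_set (by rw [hsplit]; exact subset_union_left))
      (hint.mono_set (by rw [hsplit]; exact subset_union_right))
    simp only [incGamma, ← hf]
    rw [hsplit, this]; ring
  have hd2 : HasDerivAt (fun y => ∫ t in (x/2)..y, f t) (f x) x := by
    refine intervalIntegral.integral_hasDerivAt_right ?_ ?_ ?_
    · exact (intervalIntegrable_iff (μ := volume)).2
        ((hint.mono_set (by rw [uIoc_of_le (by linarith)]; exact Ioc_subset_Ioi_self)))
    · exact ⟨Ioi 0, Ioi_mem_nhds hx, ((incG_cont s).aestronglyMeasurable measurableSet_Ioi)⟩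
    · exact ((Real.continuousAt_rpow_const x (s-1) (Or.inl (ne_of_gt hx))).mul
        (Real.continuous_exp.continuousAt.comp continuous_neg.continuousAt))
  have hd : HasDerivAt (fun y => incGamma s (x/2) - ∫ t in (x/2)..y, f t) (-(f x)) x :=
    (hd2.const_sub _)
  refine hd.congr_of_eventuallyEq ?_
  filter_upwards [Ioi_mem_nhds (by linarith : x/2 < x)] with y hy using key y hy

/-- For `κ ∈ ℝ`, `k < 1`, `m ≥ 1` and
`F(τ) = m^{k-1} Γ(1-k, 4πm Im τ) e^{-2πimτ}`, on the upper half-plane one has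
`ξ_κ F(τ) = -(4π)^{1-k} v^{κ-k} e^{2πimτ}`. -/
theorem stmt7 (κ k : ℝ) (hk : k < 1) (m : ℕ) (hm : 0 < m) (τ : ℂ) (hτ : 0 < τ.im) :
    xiOp κ
      (fun z => (((m : ℝ) ^ (k - 1) : ℝ) : ℂ) *
        (incGamma (1 - k) (4 * π * (m : ℝ) * z.im) : ℂ) *
        Complex.exp (-(2 * π * Complex.I * (m : ℂ) * z))) τ =
    -((((4 * π) ^ (1 - k) : ℝ)) : ℂ) * (((τ.im ^ (κ - k) : ℝ)) : ℂ) *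
      Complex.exp (2 * π * Complex.I * (m : ℂ) * τ) := by
  set v : ℝ := τ.im with hv
  have hm0 : (0:ℝ) < (m:ℝ) := by exact_mod_cast hm
  have hMv : 0 < 4 * π * (m:ℝ) * v := by positivity
  set C : ℂ := (((m : ℝ) ^ (k - 1) : ℝ) : ℂ) with hC
  set G : ℝ := incGamma (1 - k) (4 * π * (m : ℝ) * v) with hG
  set dG : ℝ := (-((4 * π * (m:ℝ) * v) ^ (1 - k - 1) * Real.exp (-(4 * π * (m:ℝ) * v)))) * (4 * π * (m:ℝ)) with hdG
  set e : ℂ := Complex.exp (-(2 * π * Complex.I * (m : ℂ) * τ)) with he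
  -- pdx
  have hpdx : pdx (fun z => C * (incGamma (1 - k) (4 * π * (m : ℝ) * z.im) : ℂ) *
      Complex.exp (-(2 * π * Complex.I * (m : ℂ) * z))) τ
      = C * (G:ℂ) * (e * -(2 * π * Complex.I * (m:ℂ))) := by
    have hinner : HasDerivAt (fun z : ℂ => -(2 * π * Complex.I * (m:ℂ) * (τ + z)))
        (-(2 * π * Complex.I * (m:ℂ))) ((0:ℝ) : ℂ) := by
      simpa using (((hasDerivAt_id (((0:ℝ):ℂ))).const_add τ).const_mul
        (2 * π * Complex.I * (m:ℂ))).fun_neg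
    have hexp := (hinner.cexp.comp_ofReal).const_mul (C * (G:ℂ))
    have hfun : (fun t : ℝ => C * (incGamma (1 - k) (4 * π * (m : ℝ) * (τ + (t:ℂ)).im) : ℂ) *
        Complex.exp (-(2 * π * Complex.I * (m : ℂ) * (τ + (t:ℂ))))) =
        fun t : ℝ => C * (G:ℂ) * Complex.exp (-(2 * π * Complex.I * (m:ℂ) * (τ + (t:ℂ)))) := by
      funext t; simp [hG, hv, mul_assoc]
    rw [pdx, hfun]
    rw [hexp.deriv]
    simp [mul_assoc, mul_comm, mul_left_comm, he]
  -- pdy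
  have hpdy : pdy (fun z => C * (incGamma (1 - k) (4 * π * (m : ℝ) * z.im) : ℂ) *
      Complex.exp (-(2 * π * Complex.I * (m : ℂ) * z))) τ
      = C * (dG:ℂ) * e + C * (G:ℂ) * (e * -(2 * π * Complex.I * (m:ℂ) * Complex.I)) := by
    have hG2 : HasDerivAt (fun t : ℝ => incGamma (1 - k) (4 * π * (m:ℝ) * (v + t))) dG 0 := by
      have hlin : HasDerivAt (fun t : ℝ => 4 * π * (m:ℝ) * (v + t)) (4 * π * (m:ℝ)) 0 := by
        simpa using ((hasDerivAt_id (0:ℝ)).const_add v).const_mul (4 * π * (m:ℝ))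
      have := (incGamma_hasDerivAt (1 - k) (x := 4 * π * (m:ℝ) * (v + 0)) (by simpa using hMv)).comp 0 hlin
      simpa [hdG, Function.comp_def] using this
    have hG2' : HasDerivAt (fun t : ℝ => ((incGamma (1 - k) (4 * π * (m:ℝ) * (v + t)) : ℝ) : ℂ))
        ((dG : ℂ)) 0 := hG2.ofReal_comp
    have hinner : HasDerivAt (fun z : ℂ => -(2 * π * Complex.I * (m:ℂ) * (τ + z * Complex.I)))
        (-(2 * π * Complex.I * (m:ℂ) * Complex.I)) ((0:ℝ) : ℂ) := by
      simpa [mul_assoc] using ((((hasDerivAt_id (((0:ℝ):ℂ))).mul_const Complex.I).const_add τ).const_mul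
        (2 * π * Complex.I * (m:ℂ))).fun_neg
    have hexp : HasDerivAt (fun t : ℝ => Complex.exp (-(2 * π * Complex.I * (m:ℂ) * (τ + (t:ℂ) * Complex.I))))
        (e * -(2 * π * Complex.I * (m:ℂ) * Complex.I)) 0 := by
      have := hinner.cexp.comp_ofReal
      simpa [he] using this
    have hprod := ((hG2'.const_mul C).fun_mul hexp)
    have hfun : (fun t : ℝ => C * (incGamma (1 - k) (4 * π * (m : ℝ) * (τ + (t:ℂ) * Complex.I).im) : ℂ) *
        Complex.exp (-(2 * π * Complex.I * (m : ℂ) * (τ + (t:ℂ) * Complex.I)))) =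
        fun t : ℝ => (C * ((incGamma (1 - k) (4 * π * (m:ℝ) * (v + t)) : ℝ) : ℂ)) *
          Complex.exp (-(2 * π * Complex.I * (m:ℂ) * (τ + (t:ℂ) * Complex.I))) := by
      funext t; simp [hv]
    rw [pdy, hfun, hprod.deriv]
    simp [he, hG, mul_assoc]
  -- dbar
  have hdbar : dbar (fun z => C * (incGamma (1 - k) (4 * π * (m : ℝ) * z.im) : ℂ) *
      Complex.exp (-(2 * π * Complex.I * (m : ℂ) * z))) τ
      = Complex.I * (C * (dG:ℂ) * e) / 2 := by
    rw [dbar, hpdx, hpdy]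
    linear_combination (-(π * (m:ℂ) * C * (G:ℂ) * e * Complex.I)) * Complex.I_sq
  rw [xiOp, hdbar]
  -- conjugation and final algebra
  have hCdG : C * (dG : ℂ) = -((((4 * π) ^ (1 - k) : ℝ):ℂ) * (((v ^ (-k) : ℝ)):ℂ) *
      ((Real.exp (-(4 * π * (m:ℝ) * v)) : ℝ) : ℂ)) := by
    have hreal : (m:ℝ) ^ (k - 1) * dG =
        -((4 * π) ^ (1 - k) * v ^ (-k) * Real.exp (-(4 * π * (m:ℝ) * v))) := by
      rw [hdG, show (1 - k - 1 : ℝ) = -k by ring]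
      have h4 : (4 * π * (m:ℝ) * v) ^ (-k) = (4*π) ^ (-k) * (m:ℝ) ^ (-k) * v ^ (-k) := by
        rw [Real.mul_rpow (by positivity) (by positivity),
            Real.mul_rpow (by positivity) (by positivity)]
      have h5 : (m:ℝ) ^ (k - 1) * (m:ℝ) ^ (-k) * (m:ℝ) = 1 := by
        rw [← Real.rpow_add hm0, show k - 1 + -k = -1 by ring, Real.rpow_neg_one]
        field_simp
      have h6 : (4 * π) * (4*π) ^ (-k) = (4*π) ^ (1 - k) := by
        rw [show (1 - k : ℝ) = 1 + -k by ring, Real.rpow_add (by positivity), Real.rpow_one]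
      rw [h4]
      linear_combination (-(4*π*(4*π)^(-k) * v^(-k) * Real.exp (-(4*π*(m:ℝ)*v)))) * h5 +
        (-(v^(-k) * Real.exp (-(4*π*(m:ℝ)*v)))) * h6
    rw [hC, ← Complex.ofReal_mul, hreal]
    push_cast
    ring
  have hconjτ : (starRingEnd ℂ) τ = τ - 2 * (v:ℂ) * Complex.I := by
    have h := Complex.sub_conj τ
    rw [← hv] at h
    push_cast at h
    linear_combination -h
  have hce : (starRingEnd ℂ) e * ((Real.exp (-(4*π*(m:ℝ)*v)) : ℝ) : ℂ)
      = Complex.exp (2 * π * Complex.I * (m:ℂ) * τ) := by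
    rw [he, ← Complex.exp_conj, Complex.ofReal_exp, ← Complex.exp_add]
    congr 1
    simp only [map_neg, map_mul, Complex.conj_I, Complex.conj_ofReal, Complex.conj_natCast,
      map_ofNat]
    rw [hconjτ]
    push_cast [Complex.ofReal_natCast]
    linear_combination (-(4*π*(m:ℂ)*v) : ℂ) * Complex.I_sq
  have hvk : ((v ^ κ : ℝ) : ℂ) * ((v ^ (-k) : ℝ) : ℂ) = ((v ^ (κ - k) : ℝ) : ℂ) := by
    rw [← Complex.ofReal_mul, ← Real.rpow_add hτ, show κ + -k = κ - k by ring]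
  have hxi : (starRingEnd ℂ) (Complex.I * (C * (dG:ℂ) * e) / 2)
      = -Complex.I * (C * (dG:ℂ) * (starRingEnd ℂ) e) / 2 := by
    simp only [hC, map_div₀, map_mul, Complex.conj_I, Complex.conj_ofReal, map_ofNat]
    try ring
  rw [hxi]
  linear_combination (-Complex.I^2 * ((v^κ : ℝ):ℂ) * (starRingEnd ℂ) e) * hCdG +
    (Complex.I^2 * (((4*π)^(1-k) : ℝ):ℂ) * ((v^κ : ℝ):ℂ) * ((v^(-k) : ℝ):ℂ)) * hce +
    (Complex.I^2 * (((4*π)^(1-k) : ℝ):ℂ) * Complex.exp (2 * π * Complex.I * (m:ℂ) * τ)) * hvk +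
    ((((4*π)^(1-k) : ℝ):ℂ) * ((v^(κ-k) : ℝ):ℂ) * Complex.exp (2 * π * Complex.I * (m:ℂ) * τ)) * Complex.I_sq
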